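/- arXiv:2304.05790 — 3 statements merged into one kernel-verified Lean document; each statement's English description precedes it below -/
import Mathlib

section
/- Lemma 3.9 (approximation of the product function with Lipschitz constant 1 on [−1/8,1/8]^d): There exists a constant K ∈ ℕ which satisfies for all d ∈ ℕ, p ∈ [1,∞], ε ∈ (0,1] that Cost_p(p_d|_{[−1/8,1/8]^d}, 1, ε) ≤ K·d⁴·(1 + ln(ε^{−1})). -/
/-!
Squaring is approximated by Yarotsky's sawtooth construction
`F_k t = t - ∑_{j=1}^k tent^[j] t / 4^j`, which is within `4^-(k+1)` of `t ^ 2` on `[0, 1]` and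
whose difference quotients are within `2^-k` of those of `t ^ 2`; for `k ≥ 2` it is therefore
`3/4`-Lipschitz on `[0, 1/4]`. Polarization turns it into a multiplication on `[-1/8, 1/8]²` with
error `4^-(k+1)/4` that maps the box into itself and is `3/8`-Lipschitz in each argument.
Multiplying the coordinates one at a time thus approximates `∏ xᵢ` within `4^-(k+1)/2` and is
`1`-Lipschitz for the maximum norm, hence for every `ℓ^p`-norm. Each multiplication takes `k + 3`
ReLU layers of width `d + 6` (six working neurons; the inputs ride along shifted by `1/8`, which
ReLU leaves unchanged), so `k ≈ ln ε⁻¹` gives `O(d³ (1 + ln ε⁻¹))` parameters.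
-/

open scoped BigOperators ENNReal

noncomputable section

/-- A ReLU deep neural network with `L + 1` affine layers (so depth at least one),
layer dimensions `ℓ 0, ℓ 1, …, ℓ (L + 1)`, weight matrices `W k` and bias vectors `b k`
(values of `ℓ`, `W`, `b` beyond layer index `L` are irrelevant for the realization
and for the number of parameters). -/
structure DNN where
  L : ℕ
  ℓ : ℕ → ℕ
  W : (k : ℕ) → Matrix (Fin (ℓ (k + 1))) (Fin (ℓ k)) ℝ
  b : (k : ℕ) → Fin (ℓ (k + 1)) → ℝ

namespace DNN

/-- The number of parameters `P(Φ) = ∑_{k=1}^{L} ℓ_k (ℓ_{k-1} + 1)` of a DNN. -/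
def params (Φ : DNN) : ℕ :=
  ∑ k ∈ Finset.range (Φ.L + 1), Φ.ℓ (k + 1) * (Φ.ℓ k + 1)

/-- The `k`-th affine layer function `x ↦ W_k x + b_k`. -/
def affine (Φ : DNN) (k : ℕ) (x : Fin (Φ.ℓ k) → ℝ) : Fin (Φ.ℓ (k + 1)) → ℝ :=
  fun i => (∑ j, Φ.W k i j * x j) + Φ.b k i

/-- The value after `k` affine layers, each followed by the ReLU activation. -/
def hidden (Φ : DNN) : (k : ℕ) → (Fin (Φ.ℓ 0) → ℝ) → (Fin (Φ.ℓ k) → ℝ)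
  | 0 => id
  | k + 1 => fun x i => max (affine Φ k (hidden Φ k x) i) 0

/-- The realization `R(Φ)`: all affine layers with ReLU in between (no activation after
the last affine layer). -/
def realize (Φ : DNN) (x : Fin (Φ.ℓ 0) → ℝ) : Fin (Φ.ℓ (Φ.L + 1)) → ℝ :=
  affine Φ Φ.L (hidden Φ Φ.L x)

/-- `Φ.Realizes f` means that the realization of `Φ` is the function `f : ℝ^m → ℝ^n`
(in particular the input and output dimensions of `Φ` are `m` and `n`). -/
def Realizes (Φ : DNN) {m n : ℕ} (f : (Fin m → ℝ) → (Fin n → ℝ)) : Prop :=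
  ∃ (hm : Φ.ℓ 0 = m) (hn : Φ.ℓ (Φ.L + 1) = n),
    ∀ (x : Fin m → ℝ) (i : Fin n),
      f x i = realize Φ (fun j => x (Fin.cast hm j)) (Fin.cast hn.symm i)

end DNN

/-- The `ℓ^p`-norm on `ℝ^k` for `p ∈ [1,∞]`. -/
def lpNorm (p : ℝ≥0∞) {k : ℕ} (x : Fin k → ℝ) : ℝ :=
  if p = ∞ then ⨆ i, |x i| else (∑ i, |x i| ^ p.toReal) ^ (1 / p.toReal)

/-- The hypercube `[a,b]^d ⊆ ℝ^d`. -/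
def cube (d : ℕ) (a b : ℝ) : Set (Fin d → ℝ) :=
  Set.Icc (fun _ => a) (fun _ => b)

/-- `Cost p D f L ε`: the minimal number of parameters of a DNN whose realization
approximates `f` on `D` up to `ε` in the `ℓ^p`-norm and is `L`-Lipschitz on `D`
with respect to the `ℓ^p`-norm; `∞` if no such DNN exists. -/
def Cost (p : ℝ≥0∞) {m n : ℕ} (D : Set (Fin m → ℝ))
    (f : (Fin m → ℝ) → (Fin n → ℝ)) (L ε : ℝ) : ℝ≥0∞ :=
  sInf { N : ℝ≥0∞ | ∃ Φ : DNN, ∃ g : (Fin m → ℝ) → (Fin n → ℝ),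
    Φ.Realizes g ∧ N = (Φ.params : ℝ≥0∞) ∧
    (∀ x ∈ D, lpNorm p (g x - f x) ≤ ε) ∧
    (∀ x ∈ D, ∀ y ∈ D, lpNorm p (g x - g y) ≤ L * lpNorm p (x - y)) }

/-- Given block sizes `d : Fin n → ℕ`, the index in `Fin (∑ j, d j)` of the `l`-th
coordinate of the `i`-th block (blocks are arranged consecutively). -/
def blockIdx {n : ℕ} (d : Fin n → ℕ) (i : Fin n) (l : Fin (d i)) : Fin (∑ j, d j) :=
  ⟨(∑ j ∈ Finset.univ.filter (fun j => j < i), d j) + l.1, by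
    have h1 : l.1 < d i := l.2
    have h2 : (∑ j ∈ Finset.univ.filter (fun j => j < i), d j) + d i ≤ ∑ j, d j := by
      have hsplit := Finset.sum_filter_add_sum_filter_not Finset.univ (fun j => j < i) d
      have h3 : d i ≤ ∑ j ∈ Finset.univ.filter (fun j => ¬ j < i), d j :=
        Finset.single_le_sum (fun _ _ => Nat.zero_le _) (by simp)
      omega
    omega⟩

/-- The class `𝒫_{k,p}([a,b]^d, L)`: parallelizations `f = f_1 □ ⋯ □ f_m` of real-valued
functions `f_i` of at most `k` variables that are `L`-Lipschitz w.r.t. the `ℓ^p`-norm. -/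
def MemPLip (k : ℕ) (p : ℝ≥0∞) (a b L : ℝ) {d m : ℕ}
    (f : (Fin d → ℝ) → (Fin m → ℝ)) : Prop :=
  ∃ (dims : Fin m → ℕ) (hd : ∑ i, dims i = d) (g : ∀ i, (Fin (dims i) → ℝ) → ℝ),
    (∀ i, 0 < dims i) ∧ (∀ i, dims i ≤ k) ∧
    (∀ i, ∀ x ∈ cube (dims i) a b, ∀ y ∈ cube (dims i) a b,
      |g i x - g i y| ≤ L * lpNorm p (x - y)) ∧
    (∀ x ∈ cube d a b, ∀ i : Fin m,
      f x i = g i (fun l => x (Fin.cast hd (blockIdx dims i l))))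

/-- The class `M([a,b]^d)`: parallelizations of maximum functions `m_{d_1} □ ⋯ □ m_{d_m}`. -/
def MemMaxClass (a b : ℝ) {d m : ℕ} (f : (Fin d → ℝ) → (Fin m → ℝ)) : Prop :=
  ∃ (dims : Fin m → ℕ) (hd : ∑ i, dims i = d),
    (∀ i, 0 < dims i) ∧
    (∀ x ∈ cube d a b, ∀ i : Fin m,
      f x i = ⨆ l : Fin (dims i), x (Fin.cast hd (blockIdx dims i l)))

/-- The class `P([a,b]^d)`: parallelizations of product functions `p_{d_1} □ ⋯ □ p_{d_m}`. -/
def MemProdClass (a b : ℝ) {d m : ℕ} (f : (Fin d → ℝ) → (Fin m → ℝ)) : Prop :=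
  ∃ (dims : Fin m → ℕ) (hd : ∑ i, dims i = d),
    (∀ i, 0 < dims i) ∧
    (∀ x ∈ cube d a b, ∀ i : Fin m,
      f x i = ∏ l : Fin (dims i), x (Fin.cast hd (blockIdx dims i l)))

/-- `f` coincides on `[a,b]^d` with the extended maximum function
`𝔪_d(x) = (max{x_1}, max{x_1,x_2}, …, max{x_1,…,x_d})`. -/
def IsExtMaxOn (a b : ℝ) {d m : ℕ} (f : (Fin d → ℝ) → (Fin m → ℝ)) : Prop :=
  ∃ h : d = m, ∀ x ∈ cube d a b, ∀ i : Fin m,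
    f x i = (Finset.Iic (Fin.cast h.symm i)).sup' Finset.nonempty_Iic x

/-- `f` coincides on `[a,b]^d` with the extended product function
`𝔭_d(x) = (x_1, x_1 x_2, …, x_1 ⋯ x_d)`. -/
def IsExtProdOn (a b : ℝ) {d m : ℕ} (f : (Fin d → ℝ) → (Fin m → ℝ)) : Prop :=
  ∃ h : d = m, ∀ x ∈ cube d a b, ∀ i : Fin m,
    f x i = ∏ j ∈ Finset.Iic (Fin.cast h.symm i), x j

/-- Iterated composition: `compSeq dims f k = f_{k-1} ∘ ⋯ ∘ f_1 ∘ f_0`. -/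
def compSeq (dims : ℕ → ℕ) (f : ∀ i : ℕ, (Fin (dims i) → ℝ) → (Fin (dims (i + 1)) → ℝ)) :
    (k : ℕ) → (Fin (dims 0) → ℝ) → (Fin (dims k) → ℝ)
  | 0 => id
  | k + 1 => fun x => f k (compSeq dims f k x)

lemma abs_le_lpNorm {p : ℝ≥0∞} (hp : 1 ≤ p) {n : ℕ} (z : Fin n → ℝ) (i : Fin n) :
    |z i| ≤ lpNorm p z := by
  rw [lpNorm]
  split_ifs with h
  · exact le_ciSup (f := fun j => |z j|) (Set.finite_range _).bddAbove i
  · have hq : 0 < p.toReal := ENNReal.toReal_pos (by positivity) h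
    calc |z i| = (|z i| ^ p.toReal) ^ (1 / p.toReal) := by
          rw [← Real.rpow_mul (abs_nonneg _), mul_one_div_cancel hq.ne', Real.rpow_one]
      _ ≤ _ := by
          gcongr
          exact Finset.single_le_sum (f := fun j => |z j| ^ p.toReal) (fun j _ => by positivity)
            (Finset.mem_univ i)

lemma lpNorm_fin_one {p : ℝ≥0∞} (hp : 1 ≤ p) (z : Fin 1 → ℝ) : lpNorm p z = |z 0| := by
  rw [lpNorm]
  split_ifs with h
  · exact ciSup_unique (s := fun j : Fin 1 => |z j|)
  · have hq : 0 < p.toReal := ENNReal.toReal_pos (by positivity) h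
    rw [Fin.sum_univ_one, ← Real.rpow_mul (abs_nonneg _), mul_one_div_cancel hq.ne', Real.rpow_one]

lemma one_div_four_pow_le {ε : ℝ} (hε : 0 < ε) {n : ℕ} (hn : Real.log ε⁻¹ ≤ n) :
    (1 / 4 : ℝ) ^ n ≤ ε := by
  have h4 : ε⁻¹ ≤ 4 ^ n := calc
    ε⁻¹ = Real.exp (Real.log ε⁻¹) := (Real.exp_log (inv_pos.2 hε)).symm
    _ ≤ Real.exp n := Real.exp_le_exp.2 hn
    _ = Real.exp 1 ^ n := by rw [← Real.exp_nat_mul, mul_one]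
    _ ≤ 4 ^ n := by gcongr; linarith [Real.exp_one_lt_d9]
  rw [one_div, inv_pow]
  exact inv_le_of_inv_le₀ hε h4

namespace DNN

def pad {n : ℕ} (x : Fin n → ℝ) : ℕ → ℝ := fun j => if h : j < n then x ⟨j, h⟩ else 0

lemma pad_eq_sum {n : ℕ} (x : Fin n → ℝ) :
    pad x = ∑ j : Fin n, x j • Pi.single (j : ℕ) (1 : ℝ) := by
  ext m
  simp only [pad, Finset.sum_apply, Pi.smul_apply, Pi.single_apply, smul_eq_mul, mul_ite, mul_one,
    mul_zero]
  split_ifs with h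
  · rw [Finset.sum_eq_single ⟨m, h⟩ (fun j _ hj => if_neg fun e => hj (Fin.ext e.symm)) (by simp)]
    simp
  · exact (Finset.sum_eq_zero fun (j : Fin n) _ => if_neg fun (e : m = j) => h (e ▸ j.2)).symm

lemma pad_cast {n n' : ℕ} (h : n' = n) (x : Fin n → ℝ) :
    pad (fun j : Fin n' => x (Fin.cast h j)) = pad x := by
  subst h; rfl

lemma abs_pad_le_of_mem_cube {d : ℕ} {r : ℝ} (hr : 0 ≤ r) {x : Fin d → ℝ}
    (hx : x ∈ cube d (-r) r) (j : ℕ) : |pad x j| ≤ r := by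
  unfold pad
  split_ifs with h
  · exact abs_le.2 ⟨hx.1 ⟨j, h⟩, hx.2 ⟨j, h⟩⟩
  · simpa using hr

lemma prod_range_pad {d : ℕ} (x : Fin d → ℝ) : ∏ i ∈ Finset.range d, pad x i = ∏ i, x i := by
  rw [← Fin.prod_univ_eq_prod_range]
  exact Finset.prod_congr rfl fun i _ => dif_pos i.2

/-- An affine layer acting on zero-padded vectors `ℕ → ℝ`, so that networks can be assembled
without dependent types for the widths. -/
structure Layer where
  A : ℕ → (ℕ → ℝ) →ₗ[ℝ] ℝ
  c : ℕ → ℝ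

def Layer.eval (l : Layer) (w : ℕ) (y : ℕ → ℝ) : ℕ → ℝ :=
  fun i => if i < w then max (l.A i y + l.c i) 0 else 0

def ofLayers (n w m : ℕ) (hs : List Layer) (o : Layer) : DNN where
  L := hs.length
  ℓ k := if k = 0 then n else if k ≤ hs.length then w else m
  W k := Matrix.of fun i j => ((hs ++ [o]).getD k o).A i (Pi.single j 1)
  b k i := ((hs ++ [o]).getD k o).c i

variable {n w m : ℕ} {hs : List Layer} {o : Layer}

lemma affine_ofLayers (k : ℕ) (y : Fin ((ofLayers n w m hs o).ℓ k) → ℝ) (i) :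
    (ofLayers n w m hs o).affine k y i =
      ((hs ++ [o]).getD k o).A i (pad y) + ((hs ++ [o]).getD k o).c i := by
  rw [pad_eq_sum, map_sum]
  simp only [map_smul, smul_eq_mul, mul_comm (y _)]
  rfl

lemma pad_hidden_ofLayers (x : Fin ((ofLayers n w m hs o).ℓ 0) → ℝ) {k : ℕ}
    (hk : k ≤ hs.length) :
    pad ((ofLayers n w m hs o).hidden k x) = (hs.take k).foldl (fun y l => l.eval w y) (pad x) := by
  induction k with
  | zero => rfl
  | succ k ih =>
    have hlt : k < hs.length := hk
    have hget : (hs ++ [o]).getD k o = hs[k] := by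
      rw [List.getD_eq_getElem _ _ (by simp; omega), List.getElem_append_left hlt]
    have hℓ : (ofLayers n w m hs o).ℓ (k + 1) = w := by simp [ofLayers, hk]
    rw [List.take_succ_eq_append_getElem hlt, List.foldl_append, ← ih hlt.le]
    ext i
    by_cases hi : i < w
    · simp only [pad, hℓ ▸ hi, hi, dite_true, List.foldl_cons, List.foldl_nil, Layer.eval, if_true]
      exact congrArg (max · 0) ((affine_ofLayers _ _ _).trans (by rw [hget]))
    · simp [pad, hℓ, hi, Layer.eval]

lemma realizes_ofLayers :
    (ofLayers n w m hs o).Realizes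
      (fun (x : Fin n → ℝ) (i : Fin m) =>
        o.A i (hs.foldl (fun y l => l.eval w y) (pad x)) + o.c i) := by
  refine ⟨by simp [ofLayers], by simp [ofLayers], fun x i => ?_⟩
  have hget : (hs ++ [o]).getD hs.length o = o := by simp
  have h := pad_hidden_ofLayers (n := n) (m := m) (o := o) (w := w)
    (fun j => x (Fin.cast (by simp [ofLayers]) j)) (le_refl (ofLayers n w m hs o).L)
  rw [realize, affine_ofLayers, h]
  change _ = ((hs ++ [o]).getD hs.length o).A _ (List.foldl _ _ (hs.take hs.length)) +
    ((hs ++ [o]).getD hs.length o).c _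
  rw [List.take_length, pad_cast, hget]
  rfl

lemma params_ofLayers_le (hn : n ≤ w) (hm : m ≤ w) :
    (ofLayers n w m hs o).params ≤ (hs.length + 1) * (w * (w + 1)) := by
  have hℓ : ∀ k, (ofLayers n w m hs o).ℓ k ≤ w := fun k => by
    simp only [ofLayers]; split_ifs <;> omega
  calc (ofLayers n w m hs o).params ≤ ∑ _k ∈ Finset.range (hs.length + 1), w * (w + 1) :=
        Finset.sum_le_sum fun k _ => Nat.mul_le_mul (hℓ _) (Nat.add_le_add_right (hℓ _) 1)
    _ = _ := by simp

end DNN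

namespace ProductNet

def tent (t : ℝ) : ℝ := 2 * t - 4 * max (t - 1 / 2) 0

lemma tent_of_le_half {t : ℝ} (ht : t ≤ 1 / 2) : tent t = 2 * t := by
  rw [tent, max_eq_right (by linarith)]; ring

lemma tent_of_half_le {t : ℝ} (ht : 1 / 2 ≤ t) : tent t = 2 - 2 * t := by
  rw [tent, max_eq_left (sub_nonneg.2 ht)]; ring

lemma tent_mem_Icc {t : ℝ} (ht : t ∈ Set.Icc 0 1) : tent t ∈ Set.Icc 0 1 := by
  obtain ⟨h0, h1⟩ := ht
  rcases le_total t (1 / 2) with h | h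
  · rw [tent_of_le_half h]; constructor <;> linarith
  · rw [tent_of_half_le h]; constructor <;> linarith

lemma iterate_tent_mem_Icc {t : ℝ} (ht : t ∈ Set.Icc 0 1) (j : ℕ) : tent^[j] t ∈ Set.Icc 0 1 :=
  Set.MapsTo.iterate (fun _ => tent_mem_Icc) j ht

/-- Yarotsky's approximation of `t ↦ t ^ 2`, in self-similar form (see `sqApprox_succ`). -/
def sqApprox : ℕ → ℝ → ℝ
  | 0, t => t
  | k + 1, t => t - tent t / 2 + sqApprox k (tent t) / 4

lemma sqApprox_succ (k : ℕ) (t : ℝ) :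
    sqApprox (k + 1) t = sqApprox k t - tent^[k + 1] t / 4 ^ (k + 1) := by
  induction k generalizing t with
  | zero => simp [sqApprox]; ring
  | succ k ih =>
    rw [sqApprox, ih, sqApprox, Function.iterate_succ_apply tent (k + 1) t]
    ring

lemma sub_tent_add_sq_tent (t : ℝ) :
    t - tent t / 2 + tent t ^ 2 / 4 = t ^ 2 := by
  rcases le_total t (1 / 2) with h | h
  · rw [tent_of_le_half h]; ring
  · rw [tent_of_half_le h]; ring

lemma sqApprox_mem_Icc {t : ℝ} (ht : t ∈ Set.Icc 0 1) (k : ℕ) :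
    sqApprox k t ∈ Set.Icc (t ^ 2) (t ^ 2 + (1 / 4) ^ (k + 1)) := by
  induction k generalizing t with
  | zero =>
    obtain ⟨h0, h1⟩ := ht
    simp only [sqApprox, Set.mem_Icc]; constructor <;> nlinarith [sq_nonneg (t - 1 / 2)]
  | succ k ih =>
    obtain ⟨lo, hi⟩ := ih (tent_mem_Icc ht)
    have key := sub_tent_add_sq_tent t
    simp only [sqApprox, pow_succ, Set.mem_Icc] at *
    constructor <;> nlinarith

lemma sqApprox_sub_sqApprox_mem_Icc (k : ℕ) {x y : ℝ} (hx : 0 ≤ x) (hxy : x ≤ y) (hy : y ≤ 1) :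
    sqApprox k y - sqApprox k x ∈
      Set.Icc ((x + y - (1 / 2) ^ k) * (y - x)) ((x + y + (1 / 2) ^ k) * (y - x)) := by
  induction k generalizing x y with
  | zero => simp only [sqApprox, pow_zero, Set.mem_Icc]; constructor <;> nlinarith
  | succ k ih =>
    have hp : ((1 : ℝ) / 2) ^ (k + 1) = (1 / 2) ^ k / 2 := by ring
    -- on each half of `[0, 1]` the tent map is affine with slope `±2`
    have half : ∀ x y : ℝ, 0 ≤ x → x ≤ y → y ≤ 1 → y ≤ 1 / 2 ∨ 1 / 2 ≤ x →
        sqApprox (k + 1) y - sqApprox (k + 1) x ∈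
          Set.Icc ((x + y - (1 / 2) ^ (k + 1)) * (y - x))
            ((x + y + (1 / 2) ^ (k + 1)) * (y - x)) := by
      rintro x y hx hxy hy (hy' | hx')
      · obtain ⟨h₁, h₂⟩ := ih (x := 2 * x) (y := 2 * y) (by linarith) (by linarith) (by linarith)
        simp only [sqApprox, tent_of_le_half (hxy.trans hy'), tent_of_le_half hy', hp, Set.mem_Icc]
        constructor <;> nlinarith
      · obtain ⟨h₁, h₂⟩ := ih (x := 2 - 2 * y) (y := 2 - 2 * x) (by linarith) (by linarith)
          (by linarith)
        simp only [sqApprox, tent_of_half_le hx', tent_of_half_le (hx'.trans hxy), hp, Set.mem_Icc]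
        constructor <;> nlinarith
    rcases le_total y (1 / 2) with h | h
    · exact half x y hx hxy hy (.inl h)
    rcases le_total (1 / 2) x with h' | h'
    · exact half x y hx hxy hy (.inr h')
    · obtain ⟨h₁, h₂⟩ := half x (1 / 2) hx h' (by norm_num) (.inl le_rfl)
      obtain ⟨h₃, h₄⟩ := half (1 / 2) y (by norm_num) h hy (.inr le_rfl)
      constructor <;> nlinarith

lemma abs_sqApprox_sub_sqApprox_le {k : ℕ} (hk : 2 ≤ k) {x y : ℝ} (hx0 : 0 ≤ x) (hx1 : x ≤ 1 / 4)
    (hy0 : 0 ≤ y) (hy1 : y ≤ 1 / 4) : |sqApprox k x - sqApprox k y| ≤ 3 / 4 * |x - y| := by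
  have hpow : ((1 : ℝ) / 2) ^ k ≤ (1 / 2) ^ 2 := pow_le_pow_of_le_one (by norm_num) (by norm_num) hk
  have hpos : (0 : ℝ) < (1 / 2) ^ k := by positivity
  wlog hxy : x ≤ y generalizing x y
  · rw [abs_sub_comm, abs_sub_comm x]; exact this hy0 hy1 hx0 hx1 (le_of_not_ge hxy)
  obtain ⟨h₁, h₂⟩ := sqApprox_sub_sqApprox_mem_Icc k hx0 hxy (by linarith)
  rw [abs_sub_comm, abs_sub_comm x, abs_of_nonneg (sub_nonneg.2 hxy), abs_le]
  constructor <;> nlinarith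

/-- Polarization: `a b = ((a + b) ^ 2 - (a - b) ^ 2) / 4`. -/
def mulApprox (k : ℕ) (a b : ℝ) : ℝ := (sqApprox k |a + b| - sqApprox k |a - b|) / 4

lemma abs_mulApprox_sub_mul_le (k : ℕ) {a b : ℝ} (hab : |a| + |b| ≤ 1) :
    |mulApprox k a b - a * b| ≤ (1 / 4) ^ (k + 1) / 4 := by
  obtain ⟨h₁, h₂⟩ := sqApprox_mem_Icc ⟨abs_nonneg (a + b), (abs_add_le a b).trans hab⟩ k
  obtain ⟨h₃, h₄⟩ := sqApprox_mem_Icc ⟨abs_nonneg (a - b), (abs_sub a b).trans hab⟩ k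
  rw [sq_abs] at h₁ h₂ h₃ h₄
  rw [mulApprox, abs_le]
  constructor <;> nlinarith

lemma abs_mulApprox_le (k : ℕ) {a b : ℝ} (ha : |a| ≤ 1 / 8) (hb : |b| ≤ 1 / 8) :
    |mulApprox k a b| ≤ 1 / 8 := by
  have he := abs_mulApprox_sub_mul_le k (a := a) (b := b) (by linarith)
  have hab : |a * b| ≤ 1 / 64 := by
    rw [abs_mul]; nlinarith [abs_nonneg a, abs_nonneg b]
  have hp : ((1 : ℝ) / 4) ^ (k + 1) ≤ 1 / 4 :=
    pow_le_of_le_one (by norm_num) (by norm_num) (by omega)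
  calc |mulApprox k a b| = |(mulApprox k a b - a * b) + a * b| := by ring_nf
    _ ≤ |mulApprox k a b - a * b| + |a * b| := abs_add_le _ _
    _ ≤ 1 / 8 := by linarith

lemma abs_mulApprox_sub_mulApprox_le {k : ℕ} (hk : 2 ≤ k) {a b a' b' : ℝ}
    (ha : |a| ≤ 1 / 8) (hb : |b| ≤ 1 / 8) (ha' : |a'| ≤ 1 / 8) (hb' : |b'| ≤ 1 / 8) :
    |mulApprox k a b - mulApprox k a' b'| ≤ 3 / 8 * (|a - a'| + |b - b'|) := by
  have hsq : ∀ u v : ℝ, |u| ≤ 1 / 4 → |v| ≤ 1 / 4 →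
      abs (sqApprox k |u| - sqApprox k |v|) ≤ 3 / 4 * |u - v| := fun u v hu hv =>
    (abs_sqApprox_sub_sqApprox_le hk (abs_nonneg u) hu (abs_nonneg v) hv).trans
      (mul_le_mul_of_nonneg_left (abs_abs_sub_abs_le_abs_sub u v) (by norm_num))
  have hplus := hsq (a + b) (a' + b') (by linarith [abs_add_le a b])
    (by linarith [abs_add_le a' b'])
  have hminus := hsq (a - b) (a' - b') (by linarith [abs_sub a b]) (by linarith [abs_sub a' b'])
  have h₁ : |a + b - (a' + b')| ≤ |a - a'| + |b - b'| := by
    rw [show a + b - (a' + b') = (a - a') + (b - b') by ring]; exact abs_add_le _ _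
  have h₂ : |a - b - (a' - b')| ≤ |a - a'| + |b - b'| := by
    rw [show a - b - (a' - b') = (a - a') - (b - b') by ring]; exact abs_sub _ _
  set P := sqApprox k |a + b| - sqApprox k |a' + b'|
  set Q := sqApprox k |a - b| - sqApprox k |a' - b'|
  have hsplit : mulApprox k a b - mulApprox k a' b' = (P - Q) / 4 := by
    unfold mulApprox; ring
  rw [hsplit, abs_div, abs_of_pos (by norm_num : (0 : ℝ) < 4)]
  linarith [abs_sub P Q]

def prodChain (m : ℝ → ℝ → ℝ) (x : ℕ → ℝ) : ℕ → ℝ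
  | 0 => x 0
  | j + 1 => m (prodChain m x j) (x (j + 1))

section prodChain

variable {m : ℝ → ℝ → ℝ} {x y : ℕ → ℝ} {r : ℝ}

lemma abs_prodChain_le (hm : ∀ a b, |a| ≤ r → |b| ≤ r → |m a b| ≤ r) (hx : ∀ i, |x i| ≤ r) :
    ∀ j, |prodChain m x j| ≤ r
  | 0 => hx 0
  | j + 1 => hm _ _ (abs_prodChain_le hm hx j) (hx (j + 1))

lemma abs_prodChain_sub_prod_le {δ : ℝ} (hr : r ≤ 1 / 2)
    (hm : ∀ a b, |a| ≤ r → |b| ≤ r → |m a b| ≤ r)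
    (hmul : ∀ a b, |a| ≤ r → |b| ≤ r → |m a b - a * b| ≤ δ) (hx : ∀ i, |x i| ≤ r) :
    ∀ j, |prodChain m x j - ∏ i ∈ Finset.range (j + 1), x i| ≤ 2 * δ
  | 0 => by
    have hδ : 0 ≤ δ := (abs_nonneg _).trans (hmul _ _ (hx 0) (hx 0))
    simpa [prodChain] using hδ
  | j + 1 => by
    set c := prodChain m x j
    have ih := abs_prodChain_sub_prod_le hr hm hmul hx j
    have hδ := hmul c (x (j + 1)) (abs_prodChain_le hm hx j) (hx (j + 1))
    calc |prodChain m x (j + 1) - ∏ i ∈ Finset.range (j + 1 + 1), x i|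
        = |(m c (x (j + 1)) - c * x (j + 1)) +
            x (j + 1) * (c - ∏ i ∈ Finset.range (j + 1), x i)| := by
          rw [Finset.prod_range_succ]; congr 1; simp only [prodChain, c]; ring
      _ ≤ δ + r * (2 * δ) := by
          refine (abs_add_le _ _).trans (add_le_add hδ ?_)
          rw [abs_mul]
          exact mul_le_mul (hx _) ih (abs_nonneg _) ((abs_nonneg _).trans (hx 0))
      _ ≤ 2 * δ := by nlinarith [(abs_nonneg _).trans hδ]

lemma abs_prodChain_sub_prodChain_le (hm : ∀ a b, |a| ≤ r → |b| ≤ r → |m a b| ≤ r)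
    (hlip : ∀ a b a' b', |a| ≤ r → |b| ≤ r → |a'| ≤ r → |b'| ≤ r →
      |m a b - m a' b'| ≤ (|a - a'| + |b - b'|) / 2)
    (hx : ∀ i, |x i| ≤ r) (hy : ∀ i, |y i| ≤ r) {M : ℝ} (hM : ∀ i, |x i - y i| ≤ M) :
    ∀ j, |prodChain m x j - prodChain m y j| ≤ M
  | 0 => hM 0
  | j + 1 => by
    have ih := abs_prodChain_sub_prodChain_le hm hlip hx hy hM j
    calc _ ≤ (|prodChain m x j - prodChain m y j| + |x (j + 1) - y (j + 1)|) / 2 :=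
          hlip _ _ _ _ (abs_prodChain_le hm hx j) (hx _) (abs_prodChain_le hm hy j) (hy _)
      _ ≤ M := by linarith [hM (j + 1)]

end prodChain

open DNN

def coord (j : ℕ) : (ℕ → ℝ) →ₗ[ℝ] ℝ := LinearMap.proj j

@[simp] lemma coord_apply (j : ℕ) (y : ℕ → ℝ) : coord j y = y j := rfl

def regs (v : Fin 6 → ℝ) (τ : ℕ → ℝ) : ℕ → ℝ := fun i => if h : i < 6 then v ⟨i, h⟩ else τ (i - 6)

def regLayer (A : Fin 6 → (ℕ → ℝ) →ₗ[ℝ] ℝ) (c : Fin 6 → ℝ) : Layer where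
  A i := if h : i < 6 then A ⟨i, h⟩ else coord i
  c i := if h : i < 6 then c ⟨i, h⟩ else 0

section layers

variable {d : ℕ} {τ : ℕ → ℝ}

lemma regLayer_eval_regs (hτ : ∀ j, 0 ≤ τ j) (hτd : ∀ j, d ≤ j → τ j = 0)
    (A : Fin 6 → (ℕ → ℝ) →ₗ[ℝ] ℝ) (c : Fin 6 → ℝ) (v : Fin 6 → ℝ) :
    (regLayer A c).eval (d + 6) (regs v τ) = regs (fun r => max (A r (regs v τ) + c r) 0) τ := by
  ext i
  by_cases hi : i < 6
  · simp [regs, regLayer, Layer.eval, hi, show i < d + 6 by omega]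
  · by_cases hid : i < d + 6
    · simp [regs, regLayer, Layer.eval, hi, hid, hτ]
    · simp [regs, Layer.eval, hi, hid, hτd (i - 6) (by omega)]

def stageInput (c : ℝ) (τ : ℕ → ℝ) : ℕ → ℝ := regs ![c + 1 / 8, 0, 0, 0, 0, 0] τ

def sawState (j : ℕ) (u v : ℝ) (τ : ℕ → ℝ) : ℕ → ℝ :=
  regs ![tent^[j] u, max (tent^[j] u - 1 / 2) 0, sqApprox j u,
    tent^[j] v, max (tent^[j] v - 1 / 2) 0, sqApprox j v] τ

/-- Register `s + 7` holds the next input `x (s + 1)`, shifted by `1 / 8`. -/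
def absLayer (s : ℕ) : Layer :=
  regLayer ![coord 0 + coord (s + 7), -(coord 0 + coord (s + 7)), coord 0 - coord (s + 7),
    coord (s + 7) - coord 0, 0, 0] ![-(1 / 4), 1 / 4, 0, 0, 0, 0]

def splitLayer : Layer :=
  regLayer ![coord 0 + coord 1, coord 0 + coord 1, coord 0 + coord 1,
    coord 2 + coord 3, coord 2 + coord 3, coord 2 + coord 3] ![0, -(1 / 2), 0, 0, -(1 / 2), 0]

def tentRow (o : ℕ) : (ℕ → ℝ) →ₗ[ℝ] ℝ := (2 : ℝ) • coord o - (4 : ℝ) • coord (o + 1)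

def sawLayer (j : ℕ) : Layer :=
  regLayer ![tentRow 0, tentRow 0, coord 2 - ((4 : ℝ) ^ (j + 1))⁻¹ • tentRow 0,
    tentRow 3, tentRow 3, coord 5 - ((4 : ℝ) ^ (j + 1))⁻¹ • tentRow 3]
    ![0, -(1 / 2), 0, 0, -(1 / 2), 0]

def combineLayer : Layer :=
  regLayer ![(1 / 4 : ℝ) • (coord 2 - coord 5), 0, 0, 0, 0, 0] ![1 / 8, 0, 0, 0, 0, 0]

variable (hτ : ∀ j, 0 ≤ τ j) (hτd : ∀ j, d ≤ j → τ j = 0)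
include hτ hτd

lemma absLayer_eval_stageInput {s : ℕ} {b : ℝ} (hb : τ (s + 1) = b + 1 / 8) (c : ℝ) :
    (absLayer s).eval (d + 6) (stageInput c τ) =
      regs ![max (c + b) 0, max (-(c + b)) 0, max (c - b) 0, max (-(c - b)) 0, 0, 0] τ := by
  rw [absLayer, stageInput, regLayer_eval_regs hτ hτd]
  congr 1
  ext r
  fin_cases r <;> simp [regs, hb, show ¬ s + 7 < 6 by omega] <;> ring_nf

lemma splitLayer_eval (p q : ℝ) :
    splitLayer.eval (d + 6) (regs ![max p 0, max (-p) 0, max q 0, max (-q) 0, 0, 0] τ) =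
      sawState 0 |p| |q| τ := by
  rw [splitLayer, regLayer_eval_regs hτ hτd, sawState]
  congr 1
  ext r
  fin_cases r <;> simp [regs, sqApprox, max_zero_add_max_neg_zero_eq_abs_self, sub_eq_add_neg]

lemma sawLayer_eval {u v : ℝ} (hu : u ∈ Set.Icc 0 1) (hv : v ∈ Set.Icc 0 1) (j : ℕ) :
    (sawLayer j).eval (d + 6) (sawState j u v τ) = sawState (j + 1) u v τ := by
  have htent (t : ℝ) : 2 * tent^[j] t - 4 * max (tent^[j] t - 2⁻¹) 0 = tent^[j] (tent t) := by
    rw [← Function.iterate_succ_apply, Function.iterate_succ_apply', tent]; norm_num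
  have hsq (t : ℝ) : sqApprox j t - (4 ^ (j + 1))⁻¹ * tent^[j] (tent t) = sqApprox (j + 1) t := by
    rw [sqApprox_succ, Function.iterate_succ_apply, div_eq_inv_mul]
  have htent_nonneg {t : ℝ} (ht : t ∈ Set.Icc 0 1) : 0 ≤ tent^[j] (tent t) :=
    (iterate_tent_mem_Icc (tent_mem_Icc ht) _).1
  have hsq_nonneg {t : ℝ} (ht : t ∈ Set.Icc 0 1) : 0 ≤ sqApprox (j + 1) t :=
    (sq_nonneg t).trans (sqApprox_mem_Icc ht _).1
  rw [sawLayer, sawState, regLayer_eval_regs hτ hτd, sawState]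
  congr 1
  ext r
  fin_cases r <;>
    simp [regs, tentRow, htent, hsq, htent_nonneg, hsq_nonneg, hu, hv, ← sub_eq_add_neg]

lemma combineLayer_eval {k : ℕ} {c b : ℝ} (h : |mulApprox k c b| ≤ 1 / 8) :
    combineLayer.eval (d + 6) (sawState k |c + b| |c - b| τ) = stageInput (mulApprox k c b) τ := by
  rw [combineLayer, sawState, regLayer_eval_regs hτ hτd, stageInput]
  congr 1
  ext r
  fin_cases r <;> simp [regs]
  have h' := (abs_le.1 h).1
  rw [mulApprox] at h' ⊢
  rw [max_eq_left (by linarith)]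
  ring

def stageLayers (k s : ℕ) : List Layer :=
  absLayer s :: splitLayer :: (List.range k).map sawLayer ++ [combineLayer]

lemma foldl_sawLayers {u v : ℝ} (hu : u ∈ Set.Icc 0 1) (hv : v ∈ Set.Icc 0 1) (j : ℕ) :
    ((List.range j).map sawLayer).foldl (fun y l => l.eval (d + 6) y) (sawState 0 u v τ) =
      sawState j u v τ := by
  induction j with
  | zero => rfl
  | succ j ih =>
    rw [List.range_succ, List.map_append, List.foldl_append, ih]
    exact sawLayer_eval hτ hτd hu hv j

lemma foldl_stageLayers (k : ℕ) {s : ℕ} {b c : ℝ} (hτb : τ (s + 1) = b + 1 / 8) (hb : |b| ≤ 1 / 8)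
    (hc : |c| ≤ 1 / 8) :
    (stageLayers k s).foldl (fun y l => l.eval (d + 6) y) (stageInput c τ) =
      stageInput (mulApprox k c b) τ := by
  have hu : |c + b| ∈ Set.Icc (0 : ℝ) 1 := ⟨abs_nonneg _, by linarith [abs_add_le c b]⟩
  have hv : |c - b| ∈ Set.Icc (0 : ℝ) 1 := ⟨abs_nonneg _, by linarith [abs_sub c b]⟩
  simp only [stageLayers, List.foldl_append, List.foldl_cons, List.foldl_nil]
  rw [absLayer_eval_stageInput hτ hτd hτb, splitLayer_eval hτ hτd, foldl_sawLayers hτ hτd hu hv,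
    combineLayer_eval hτ hτd (abs_mulApprox_le k hc hb)]

end layers

/-- The inputs, shifted by `1 / 8` so that they pass through ReLU unchanged. -/
def inputTail (d : ℕ) (y : ℕ → ℝ) : ℕ → ℝ := fun j => if j < d then y j + 1 / 8 else 0

def inputLayer : Layer where
  A i := if i < 6 then (if i = 0 then coord 0 else 0) else coord (i - 6)
  c i := if 0 < i ∧ i < 6 then 0 else 1 / 8

def outputLayer : Layer := ⟨fun _ => coord 0, fun _ => -(1 / 8)⟩

def productLayers (d k : ℕ) : List Layer :=
  inputLayer :: (List.range (d - 1)).flatMap (stageLayers k)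

section product

variable {d : ℕ} {y : ℕ → ℝ}

lemma inputLayer_eval (hy : ∀ j, |y j| ≤ 1 / 8) :
    inputLayer.eval (d + 6) y = stageInput (y 0) (inputTail d y) := by
  ext i
  by_cases hi : i < 6
  · interval_cases i <;> simp [inputLayer, Layer.eval, stageInput, regs]
    linarith [(abs_le.1 (hy 0)).1]
  · by_cases hid : i < d + 6
    · simp [inputLayer, Layer.eval, stageInput, regs, inputTail, hi, hid, show i - 6 < d by omega]
      linarith [(abs_le.1 (hy (i - 6))).1]
    · simp [Layer.eval, stageInput, regs, inputTail, hi, hid, show ¬ i - 6 < d by omega]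

lemma foldl_productLayers (hd : 0 < d) (hy : ∀ j, |y j| ≤ 1 / 8) (k : ℕ) :
    (productLayers d k).foldl (fun z l => l.eval (d + 6) z) y =
      stageInput (prodChain (mulApprox k) y (d - 1)) (inputTail d y) := by
  have hτ : ∀ j, 0 ≤ inputTail d y j := fun j => by
    unfold inputTail; split_ifs <;> linarith [(abs_le.1 (hy j)).1]
  have hτd : ∀ j, d ≤ j → inputTail d y j = 0 := fun j hj => if_neg (by omega)
  suffices ∀ s ≤ d - 1, (inputLayer :: (List.range s).flatMap (stageLayers k)).foldl
      (fun z l => l.eval (d + 6) z) y =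
        stageInput (prodChain (mulApprox k) y s) (inputTail d y) from this _ le_rfl
  intro s hs
  induction s with
  | zero => exact inputLayer_eval hy
  | succ s ih =>
    rw [List.range_succ, List.flatMap_append, ← List.cons_append, List.foldl_append, ih (by omega),
      List.flatMap_singleton, prodChain]
    exact foldl_stageLayers hτ hτd k (if_pos (by omega)) (hy _)
      (abs_prodChain_le (fun a b => abs_mulApprox_le k) hy s)

end product

def productNet (d k : ℕ) : DNN := DNN.ofLayers d (d + 6) 1 (productLayers d k) outputLayer

lemma outputLayer_foldl_productLayers {d k : ℕ} (hd : 0 < d) {x : Fin d → ℝ}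
    (hx : x ∈ cube d (-(1 / 8)) (1 / 8)) (i : ℕ) :
    outputLayer.A i ((productLayers d k).foldl (fun z l => l.eval (d + 6) z) (pad x)) +
      outputLayer.c i = prodChain (mulApprox k) (pad x) (d - 1) := by
  rw [foldl_productLayers hd (abs_pad_le_of_mem_cube (by norm_num) hx)]
  simp [outputLayer, stageInput, regs]

theorem cost_product_le_params {d k : ℕ} (hd : 0 < d) (hk : 2 ≤ k) {p : ℝ≥0∞} (hp : 1 ≤ p)
    {ε : ℝ} (hε : (1 / 4) ^ k ≤ ε) :
    Cost p (cube d (-(1 / 8)) (1 / 8)) (fun x (_ : Fin 1) => ∏ i, x i) 1 ε ≤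
      (productNet d k).params := by
  have hpad : ∀ {x : Fin d → ℝ}, x ∈ cube d (-(1 / 8)) (1 / 8) → ∀ j, |pad x j| ≤ 1 / 8 :=
    abs_pad_le_of_mem_cube (by norm_num)
  refine sInf_le ⟨productNet d k, _, realizes_ofLayers, rfl, fun x hx => ?_, fun x hx y hy => ?_⟩
  · beta_reduce
    rw [lpNorm_fin_one hp, Pi.sub_apply, outputLayer_foldl_productLayers hd hx, ← prod_range_pad]
    have := abs_prodChain_sub_prod_le (by norm_num) (fun a b => abs_mulApprox_le k)
      (fun a b ha hb => abs_mulApprox_sub_mul_le k (by linarith)) (hpad hx) (d - 1)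
    rw [Nat.sub_add_cancel hd, pow_succ] at this
    linarith [pow_nonneg (by norm_num : (0 : ℝ) ≤ 1 / 4) k]
  · rw [lpNorm_fin_one hp, one_mul, Pi.sub_apply, outputLayer_foldl_productLayers hd hx,
      outputLayer_foldl_productLayers hd hy]
    refine abs_prodChain_sub_prodChain_le (fun a b => abs_mulApprox_le k) ?_
      (hpad hx) (hpad hy) (fun j => ?_) _
    · intro a b a' b' ha hb ha' hb'
      have := abs_mulApprox_sub_mulApprox_le hk ha hb ha' hb'
      nlinarith [abs_nonneg (a - a'), abs_nonneg (b - b')]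
    · by_cases hj : j < d
      · simpa [pad, hj] using abs_le_lpNorm hp (x - y) ⟨j, hj⟩
      · simpa [pad, hj] using (abs_nonneg _).trans (abs_le_lpNorm hp (x - y) ⟨0, hd⟩)

lemma params_productNet_le {d : ℕ} (hd : 0 < d) (k : ℕ) :
    (productNet d k).params ≤ 56 * d ^ 3 * (k + 3) := by
  have hlen : (productLayers d k).length = 1 + (d - 1) * (k + 3) := by
    simp [productLayers, stageLayers, List.length_flatMap]
    ring
  obtain ⟨e, rfl⟩ : ∃ e, d = e + 1 := ⟨d - 1, by omega⟩
  calc (productNet (e + 1) k).params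
        ≤ ((productLayers (e + 1) k).length + 1) * ((e + 7) * (e + 8)) :=
        params_ofLayers_le (by omega) (by omega)
    _ = (2 + e * (k + 3)) * ((e + 7) * (e + 8)) := by rw [hlen, Nat.add_sub_cancel]; ring
    _ ≤ ((e + 1) * (k + 3)) * (56 * (e + 1) ^ 2) := Nat.mul_le_mul (by nlinarith) (by nlinarith)
    _ = 56 * (e + 1) ^ 3 * (k + 3) := by ring

end ProductNet

/-- **Lemma 3.9**: approximation of the product function on `[-1/8,1/8]^d` with
Lipschitz constant `1` at cost `≤ K d⁴ (1 + ln(ε⁻¹))`. -/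
theorem product_approx_lipschitz_one :
    ∃ K : ℕ, 0 < K ∧
      ∀ d : ℕ, 0 < d → ∀ p : ℝ≥0∞, 1 ≤ p → ∀ ε : ℝ, 0 < ε → ε ≤ 1 →
        Cost p (cube d (-(1 / 8)) (1 / 8)) (fun x (_ : Fin 1) => ∏ i, x i) 1 ε ≤
          ENNReal.ofReal ((K : ℝ) * (d : ℝ) ^ 4 * (1 + Real.log ε⁻¹)) := by
  refine ⟨336, by norm_num, fun d hd p hp ε hε₀ hε₁ => ?_⟩
  set L := Real.log ε⁻¹
  have hL : 0 ≤ L := Real.log_nonneg (one_le_inv₀ hε₀ |>.2 hε₁)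
  set n := ⌈L⌉₊
  have hn : (n : ℝ) < L + 1 := Nat.ceil_lt_add_one hL
  have hε : (1 / 4 : ℝ) ^ (n + 2) ≤ ε :=
    (pow_le_pow_of_le_one (by norm_num) (by norm_num) (by omega)).trans
      (one_div_four_pow_le hε₀ (Nat.le_ceil L))
  have hd1 : (1 : ℝ) ≤ d := by exact_mod_cast hd
  calc Cost p _ _ 1 ε ≤ (ProductNet.productNet d (n + 2)).params :=
        ProductNet.cost_product_le_params hd (by omega) hp hε
    _ ≤ ENNReal.ofReal (56 * (d : ℝ) ^ 3 * (n + 2 + 3)) := by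
        rw [← ENNReal.ofReal_natCast]
        exact ENNReal.ofReal_le_ofReal
          (by exact_mod_cast ProductNet.params_productNet_le hd (n + 2))
    _ ≤ ENNReal.ofReal (((336 : ℕ) : ℝ) * (d : ℝ) ^ 4 * (1 + L)) := by
        refine ENNReal.ofReal_le_ofReal ?_
        have : (d : ℝ) ^ 3 ≤ (d : ℝ) ^ 4 := pow_le_pow_right₀ hd1 (by norm_num)
        push_cast
        nlinarith [pow_pos (by linarith : (0 : ℝ) < d) 3]

end
end

section
/- Corollary 3.12 (parallelized maximum functions): There exists a constant K ∈ ℕ which satisfies for all d ∈ ℕ, every d-dimensional hypercube Q ⊆ ℝ^d, and all ε ∈ [0,∞), p ∈ [1,∞], f ∈ M(Q) that Cost_p(f, 1, ε) ≤ K·d^K. -/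
open scoped BigOperators ENNReal

noncomputable section

/-!
On `[a,b]^d` the shifted inputs `x_j - a` are nonnegative, so ReLU networks can compute blockwise
maxima by a running maximum: after `t` steps position `j` holds the maximum of the shifted inputs
at positions `j - t, …, j` of its own block, and one step is `max u v = relu (u - v) + v` for
`v ≥ 0`. Carrying each running value as the sum of two neurons gives a network of depth `d + 1`
and width `2d`, hence `O(d³)` parameters, which computes the target exactly. A blockwise maximum is
`1`-Lipschitz for every `ℓ^p`-norm, since `|max u - max v| ≤ |u_l - v_l|` for some `l` in each
block and different blocks give different coordinates.
-/

open Finset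

namespace DNN

lemma params_le_of_width_le (Φ : DNN) {w : ℕ} (hw : ∀ k, Φ.ℓ k ≤ w) :
    Φ.params ≤ (Φ.L + 1) * (w * (w + 1)) := by
  calc Φ.params ≤ ∑ _k ∈ range (Φ.L + 1), w * (w + 1) :=
        sum_le_sum fun k _ => Nat.mul_le_mul (hw _) (Nat.succ_le_succ (hw k))
    _ = (Φ.L + 1) * (w * (w + 1)) := by rw [sum_const, card_range, smul_eq_mul]

end DNN

lemma Cost_le_params {p : ℝ≥0∞} {m n : ℕ} {D : Set (Fin m → ℝ)}
    {f g : (Fin m → ℝ) → (Fin n → ℝ)} {L ε : ℝ} {Φ : DNN} (hΦ : Φ.Realizes g)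
    (hε : ∀ x ∈ D, lpNorm p (g x - f x) ≤ ε)
    (hL : ∀ x ∈ D, ∀ y ∈ D, lpNorm p (g x - g y) ≤ L * lpNorm p (x - y)) :
    Cost p D f L ε ≤ Φ.params :=
  sInf_le ⟨Φ, g, hΦ, rfl, hε, hL⟩

lemma lpNorm_zero {p : ℝ≥0∞} (hp : p ≠ 0) {k : ℕ} : lpNorm p (0 : Fin k → ℝ) = 0 := by
  by_cases hp' : p = ∞
  · simp [lpNorm, hp']
  · have hq : p.toReal ≠ 0 := (ENNReal.toReal_pos hp hp').ne'
    simp [lpNorm, hp', Real.zero_rpow hq, Real.zero_rpow (inv_ne_zero hq)]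

lemma lpNorm_le_of_injective (p : ℝ≥0∞) {m n : ℕ} {w : Fin m → ℝ} {z : Fin n → ℝ}
    {J : Fin m → Fin n} (hJ : Function.Injective J) (h : ∀ i, |w i| ≤ |z (J i)|) :
    lpNorm p w ≤ lpNorm p z := by
  unfold lpNorm
  split_ifs
  · refine Real.iSup_le (fun i => (h i).trans ?_) (Real.iSup_nonneg fun j => abs_nonneg (z j))
    exact le_ciSup (Set.finite_range fun j => |z j|).bddAbove (J i)
  · refine Real.rpow_le_rpow (by positivity) ?_ (by positivity)
    calc ∑ i, |w i| ^ p.toReal ≤ ∑ i, |z (J i)| ^ p.toReal :=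
          sum_le_sum fun i _ => Real.rpow_le_rpow (abs_nonneg _) (h i) ENNReal.toReal_nonneg
      _ = ∑ j ∈ univ.map ⟨J, hJ⟩, |z j| ^ p.toReal := by rw [sum_map]; rfl
      _ ≤ ∑ j, |z j| ^ p.toReal :=
          sum_le_sum_of_subset_of_nonneg (subset_univ _) fun _ _ _ => by positivity

lemma exists_abs_ciSup_sub_ciSup_le {ι : Type*} [Nonempty ι] [Finite ι] (f g : ι → ℝ) :
    ∃ i, |(⨆ i, f i) - ⨆ i, g i| ≤ |f i - g i| := by
  obtain ⟨i, hi⟩ := exists_eq_ciSup_of_finite (ι := ι) (f := f)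
  obtain ⟨j, hj⟩ := exists_eq_ciSup_of_finite (ι := ι) (f := g)
  have hgi : g i ≤ g j := hj ▸ le_ciSup (Set.finite_range g).bddAbove i
  have hfj : f j ≤ f i := hi ▸ le_ciSup (Set.finite_range f).bddAbove j
  rw [← hi, ← hj]
  rcases le_total (g j) (f i) with h | h
  · refine ⟨i, (abs_of_nonneg (sub_nonneg.2 h)).trans_le ?_⟩
    linarith [le_abs_self (f i - g i)]
  · refine ⟨j, (abs_of_nonpos (sub_nonpos.2 h)).trans_le ?_⟩
    linarith [neg_le_abs (f j - g j)]

def runMax (S : Finset ℕ) (y : ℕ → ℝ) : ℕ → ℕ → ℝ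
  | 0 => y
  | t + 1 => fun j =>
    if j ∈ S then runMax S y t j else max (runMax S y t j) (runMax S y t (j - 1))

section runMax

variable {S : Finset ℕ} {y : ℕ → ℝ}

lemma runMax_nonneg (hy : ∀ j, 0 ≤ y j) (t j : ℕ) : 0 ≤ runMax S y t j := by
  induction t generalizing j with
  | zero => exact hy j
  | succ t ih =>
    simp only [runMax]
    split_ifs
    exacts [ih j, le_max_of_le_left (ih j)]

lemma runMax_eq_sup'_Icc {s : ℕ} (hs : s ∈ S) (t : ℕ) {j : ℕ} (hsj : s ≤ j)
    (hS : ∀ l ∈ S, l ≤ j → l ≤ s) :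
    runMax S y t j =
      (Icc (max s (j - t)) j).sup' (nonempty_Icc.2 (max_le hsj (j.sub_le t))) y := by
  induction t generalizing j with
  | zero => simp [runMax, hsj]
  | succ t ih =>
    simp only [runMax]
    split_ifs with hj
    · obtain rfl : j = s := le_antisymm (hS j hj le_rfl) hsj
      rw [ih hsj hS]
      simp
    · have hsj' : s < j := lt_of_le_of_ne hsj (fun h => hj (h ▸ hs))
      rw [ih hsj hS, ih (Nat.le_sub_one_of_lt hsj') fun l hl hlj => hS l hl (by omega),
        ← sup'_union]
      refine sup'_congr _ ?_ fun _ _ => rfl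
      ext l
      simp only [mem_union, mem_Icc]
      omega

end runMax

def zeroExt {n : ℕ} (v : Fin n → ℝ) (j : ℕ) : ℝ := if h : j < n then v ⟨j, h⟩ else 0

def unitRow (j₀ j : ℕ) : ℝ := if j = j₀ then 1 else 0

lemma sum_unitRow_mul {n : ℕ} (v : Fin n → ℝ) (j₀ : ℕ) :
    ∑ j : Fin n, unitRow j₀ j * v j = zeroExt v j₀ := by
  unfold zeroExt unitRow
  split_ifs with h
  · rw [sum_eq_single ⟨j₀, h⟩ (fun j _ hj => by simp [Fin.ext_iff.not.1 hj]) (by simp)]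
    simp
  · exact sum_eq_zero fun j _ => by simp [show (j : ℕ) ≠ j₀ by omega]

lemma DNN.zeroExt_hidden_succ (Φ : DNN) (k : ℕ) (x : Fin (Φ.ℓ 0) → ℝ) {i : ℕ}
    (hi : i < Φ.ℓ (k + 1)) :
    zeroExt (Φ.hidden (k + 1) x) i = max (Φ.affine k (Φ.hidden k x) ⟨i, hi⟩) 0 :=
  dif_pos hi

namespace RunMaxNet

variable (d : ℕ)

def pairRow (j₀ j : ℕ) : ℝ := unitRow j₀ j + unitRow (d + j₀) j

def pairSum {n : ℕ} (v : Fin n → ℝ) (j : ℕ) : ℝ := zeroExt v j + zeroExt v (d + j)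

variable (S : Finset ℕ)

def prevRow (i j : ℕ) : ℝ := if i ∈ S then 0 else pairRow d (i - 1) j

def prevSum {n : ℕ} (v : Fin n → ℝ) (i : ℕ) : ℝ :=
  if i ∈ S then 0 else pairSum d v (i - 1)

variable {d S}

lemma sum_pairRow_mul {n : ℕ} (v : Fin n → ℝ) (j₀ : ℕ) :
    ∑ j : Fin n, pairRow d j₀ j * v j = pairSum d v j₀ := by
  simp only [pairRow, add_mul, sum_add_distrib, sum_unitRow_mul, pairSum]

lemma sum_prevRow_mul {n : ℕ} (v : Fin n → ℝ) (i : ℕ) :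
    ∑ j : Fin n, prevRow d S i j * v j = prevSum d S v i := by
  unfold prevRow prevSum
  split_ifs
  · simp
  · exact sum_pairRow_mul v _

variable (d S) (m : ℕ) (a : ℝ) (e : ℕ → ℕ)

def width (k : ℕ) : ℕ := if k = 0 then d else if k = d + 1 then m else 2 * d

def weight (k i j : ℕ) : ℝ :=
  if k = 0 then unitRow i j
  else if k < d then (if i < d then pairRow d i j - prevRow d S i j else prevRow d S (i - d) j)
  else pairRow d (e i) j

def bias (k i : ℕ) : ℝ := if k = 0 then (if i < d then -a else 0) else if k < d then 0 else a

end RunMaxNet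

open RunMaxNet in
/-- Layer `0` puts `x_j - a` into neuron `j`. Each middle layer stores the pair
`(relu (u - v), relu v)` in neurons `j` and `d + j`, where `u`, `v` are the running values at `j`
and `j - 1` (`v = 0` if `j ∈ S` starts a block). The last layer outputs the value at `e i`
plus `a`. -/
def runMaxNet (d m : ℕ) (a : ℝ) (S : Finset ℕ) (e : ℕ → ℕ) : DNN where
  L := d
  ℓ := width d m
  W k := Matrix.of fun i j => weight d S e k i j
  b k i := bias d a k i

namespace RunMaxNet

variable {d m : ℕ} {a : ℝ} {S : Finset ℕ} {e : ℕ → ℕ}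

lemma affine_runMaxNet (k : ℕ) (v : Fin ((runMaxNet d m a S e).ℓ k) → ℝ)
    (i : Fin ((runMaxNet d m a S e).ℓ (k + 1))) :
    (runMaxNet d m a S e).affine k v i = ∑ j, weight d S e k i j.1 * v j + bias d a k i :=
  rfl

lemma runMaxNet_ℓ_zero : (runMaxNet d m a S e).ℓ 0 = d := rfl

lemma runMaxNet_ℓ_output : (runMaxNet d m a S e).ℓ ((runMaxNet d m a S e).L + 1) = m := by
  simp [runMaxNet, width]

lemma width_of_le {k : ℕ} (hk₀ : k ≠ 0) (hkd : k ≤ d) : width d m k = 2 * d := by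
  simp [width, hk₀, show k ≠ d + 1 by omega]

lemma pairSum_hidden_one (x : Fin d → ℝ) {j : ℕ} (hj : j < d) :
    pairSum d ((runMaxNet d m a S e).hidden 1 x) j = max (x ⟨j, hj⟩ - a) 0 := by
  have hw : (runMaxNet d m a S e).ℓ (0 + 1) = 2 * d := width_of_le one_ne_zero (by omega)
  rw [pairSum, DNN.zeroExt_hidden_succ (runMaxNet d m a S e) 0 x (by omega),
    DNN.zeroExt_hidden_succ (runMaxNet d m a S e) 0 x (by omega)]
  simp only [affine_runMaxNet, weight, bias, if_pos, sum_unitRow_mul, DNN.hidden]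
  simp [zeroExt, runMaxNet_ℓ_zero, hj, sub_eq_add_neg]

lemma pairSum_hidden_succ {k : ℕ} (hk₀ : k ≠ 0) (hkd : k < d)
    (x : Fin d → ℝ) {j : ℕ} (hj : j < d) :
    pairSum d ((runMaxNet d m a S e).hidden (k + 1) x) j =
      max (pairSum d ((runMaxNet d m a S e).hidden k x) j -
          prevSum d S ((runMaxNet d m a S e).hidden k x) j) 0 +
        max (prevSum d S ((runMaxNet d m a S e).hidden k x) j) 0 := by
  have hw : (runMaxNet d m a S e).ℓ (k + 1) = 2 * d := width_of_le k.succ_ne_zero hkd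
  rw [pairSum, DNN.zeroExt_hidden_succ (runMaxNet d m a S e) k x (by omega),
    DNN.zeroExt_hidden_succ (runMaxNet d m a S e) k x (by omega)]
  simp only [affine_runMaxNet, weight, bias, if_neg hk₀, if_pos hkd, if_pos hj,
    if_neg (show ¬ d + j < d by omega), Nat.add_sub_cancel_left, sub_mul, sum_sub_distrib,
    sum_pairRow_mul, sum_prevRow_mul, add_zero]

lemma pairSum_hidden (x : Fin d → ℝ) (hx : ∀ j, a ≤ x j) {t : ℕ} (ht : t < d) {j : ℕ}
    (hj : j < d) :
    pairSum d ((runMaxNet d m a S e).hidden (t + 1) x) j =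
      runMax S (zeroExt fun j => x j - a) t j := by
  have hy : ∀ j, 0 ≤ zeroExt (fun j => x j - a) j := fun j => by
    unfold zeroExt; split_ifs <;> simp [hx]
  induction t generalizing j with
  | zero =>
    rw [pairSum_hidden_one x hj, max_eq_left (sub_nonneg.2 (hx _))]
    simp [runMax, zeroExt, hj]
  | succ t ih =>
    rw [pairSum_hidden_succ t.succ_ne_zero ht x hj, prevSum, ih (by omega) hj]
    simp only [runMax]
    split_ifs
    · simp [runMax_nonneg hy t j]
    · rw [ih (by omega) (by omega), max_eq_left (runMax_nonneg hy t (j - 1)),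
        ← max_add_add_right, sub_add_cancel, zero_add]

lemma realize_runMaxNet (hd : 0 < d) (x : Fin d → ℝ) (hx : ∀ j, a ≤ x j)
    (c : Fin ((runMaxNet d m a S e).ℓ (d + 1))) (hc : e c < d) :
    (runMaxNet d m a S e).realize x c =
      runMax S (zeroExt fun j => x j - a) (d - 1) (e c) + a := by
  obtain ⟨t, rfl⟩ : ∃ t, d = t + 1 := ⟨d - 1, by omega⟩
  change (runMaxNet (t + 1) m a S e).affine (t + 1)
    ((runMaxNet (t + 1) m a S e).hidden (t + 1) x) c = _
  simp only [affine_runMaxNet, weight, bias, if_neg t.succ_ne_zero, lt_irrefl, if_false,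
    sum_pairRow_mul, pairSum_hidden x hx t.lt_succ_self hc, Nat.add_sub_cancel]

lemma runMaxNet_params_le (hd : 0 < d) (hm : m ≤ 2 * d) :
    (runMaxNet d m a S e).params ≤ 12 * d ^ 3 := by
  have hw : ∀ k, width d m k ≤ 2 * d := fun k => by unfold width; split_ifs <;> omega
  calc (runMaxNet d m a S e).params ≤ (d + 1) * (2 * d * (2 * d + 1)) :=
        (runMaxNet d m a S e).params_le_of_width_le hw
    _ ≤ 2 * d * (2 * d * (3 * d)) := by gcongr <;> omega
    _ = 12 * d ^ 3 := by ring

end RunMaxNet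

lemma sup'_Icc_eq_ciSup {n : ℕ} (hn : 0 < n) (s : ℕ) (y : ℕ → ℝ)
    (H : (Icc s (s + n - 1)).Nonempty) :
    (Icc s (s + n - 1)).sup' H y = ⨆ l : Fin n, y (s + l) := by
  have : Nonempty (Fin n) := ⟨⟨0, hn⟩⟩
  refine le_antisymm (sup'_le _ _ fun j hj => ?_) (ciSup_le fun l => le_sup' y ?_)
  · obtain ⟨hsj, hjs⟩ := mem_Icc.1 hj
    calc y j = y (s + (⟨j - s, by omega⟩ : Fin n)) := by congr 1; simp; omega
      _ ≤ _ := le_ciSup (Set.finite_range fun l : Fin n => y (s + l)).bddAbove _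
  · exact mem_Icc.2 ⟨by omega, by omega⟩

section Blocks

variable {m : ℕ} (dims : Fin m → ℕ)

def blockStart (i : Fin m) : ℕ := ∑ j ∈ univ.filter (· < i), dims j

def blockStarts : Finset ℕ := univ.image (blockStart dims)

def blockLast (i : ℕ) : ℕ :=
  if h : i < m then blockStart dims ⟨i, h⟩ + dims ⟨i, h⟩ - 1 else 0

def blockMax (x : Fin (∑ j, dims j) → ℝ) (i : Fin m) : ℝ :=
  ⨆ l : Fin (dims i), x (blockIdx dims i l)

variable {dims}

lemma blockIdx_val (i : Fin m) (l : Fin (dims i)) :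
    (blockIdx dims i l : ℕ) = blockStart dims i + l :=
  rfl

lemma blockLast_val (i : Fin m) : blockLast dims i = blockStart dims i + dims i - 1 :=
  dif_pos i.2

lemma blockStart_add_eq (i : Fin m) :
    blockStart dims i + dims i = ∑ j ∈ univ.filter (· ≤ i), dims j := by
  rw [add_comm, blockStart, ← sum_insert (f := dims) (by simp)]
  congr 1
  ext j
  simp [le_iff_lt_or_eq, or_comm]

lemma blockStart_add_le_of_lt {i i' : Fin m} (h : i < i') :
    blockStart dims i + dims i ≤ blockStart dims i' := by
  rw [blockStart_add_eq]
  exact sum_le_sum_of_subset fun j => by simpa using fun hj => hj.trans_lt h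

lemma blockStart_add_le_sum (i : Fin m) : blockStart dims i + dims i ≤ ∑ j, dims j := by
  rw [blockStart_add_eq]
  exact sum_le_sum_of_subset (filter_subset _ _)

lemma eq_of_blockIdx_eq {i i' : Fin m} {l : Fin (dims i)} {l' : Fin (dims i')}
    (h : blockIdx dims i l = blockIdx dims i' l') : i = i' := by
  have hval := congrArg Fin.val h
  rw [blockIdx_val, blockIdx_val] at hval
  by_contra hne
  rcases lt_or_gt_of_ne hne with hlt | hlt
  · have := blockStart_add_le_of_lt (dims := dims) hlt; omega
  · have := blockStart_add_le_of_lt (dims := dims) hlt; omega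

lemma lpNorm_blockMax_sub_le (hpos : ∀ i, 0 < dims i) (p : ℝ≥0∞)
    (x y : Fin (∑ j, dims j) → ℝ) :
    lpNorm p (blockMax dims x - blockMax dims y) ≤ lpNorm p (x - y) := by
  have (i : Fin m) : Nonempty (Fin (dims i)) := ⟨⟨0, hpos i⟩⟩
  choose l hl using fun i => exists_abs_ciSup_sub_ciSup_le
    (fun l => x (blockIdx dims i l)) (fun l => y (blockIdx dims i l))
  exact lpNorm_le_of_injective p (J := fun i => blockIdx dims i (l i))
    (fun _ _ h => eq_of_blockIdx_eq h) hl

lemma runMax_blockLast (hpos : ∀ i, 0 < dims i) (y : ℕ → ℝ) (i : Fin m) {t : ℕ}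
    (ht : dims i ≤ t + 1) :
    runMax (blockStarts dims) y t (blockLast dims i) =
      ⨆ l : Fin (dims i), y (blockStart dims i + l) := by
  have hi := hpos i
  have hlast := blockLast_val (dims := dims) i
  have hstart : ∀ l ∈ blockStarts dims, l ≤ blockLast dims i → l ≤ blockStart dims i := by
    intro l hl hli
    obtain ⟨i', -, rfl⟩ := mem_image.1 hl
    rcases lt_trichotomy i' i with h | rfl | h
    · have := blockStart_add_le_of_lt (dims := dims) h; omega
    · exact le_rfl
    · have := blockStart_add_le_of_lt (dims := dims) h; omega
  have hs : blockStart dims i ∈ blockStarts dims := mem_image_of_mem _ (mem_univ i)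
  rw [runMax_eq_sup'_Icc hs t (by omega) hstart,
    ← sup'_Icc_eq_ciSup hi _ y (nonempty_Icc.2 (by omega))]
  exact sup'_congr _ (by rw [hlast]; congr 1; omega) fun _ _ => rfl

open RunMaxNet in
lemma realize_runMaxNet_blocks (hpos : ∀ i, 0 < dims i) {a b : ℝ}
    {x : Fin (∑ j, dims j) → ℝ} (hx : x ∈ cube (∑ j, dims j) a b) (i : Fin m)
    (c : Fin ((runMaxNet (∑ j, dims j) m a (blockStarts dims) (blockLast dims)).ℓ
      (∑ j, dims j + 1))) (hc : (c : ℕ) = i) :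
    (runMaxNet (∑ j, dims j) m a (blockStarts dims) (blockLast dims)).realize x c =
      blockMax dims x i := by
  have hi := hpos i
  have : Nonempty (Fin (dims i)) := ⟨⟨0, hi⟩⟩
  have hsum := blockStart_add_le_sum (dims := dims) i
  have hlast : blockLast dims c < ∑ j, dims j := by
    rw [hc, blockLast_val]
    omega
  have hy (l : Fin (dims i)) :
      zeroExt (fun j => x j - a) (blockStart dims i + l) = x (blockIdx dims i l) - a :=
    dif_pos (blockIdx dims i l).2
  rw [realize_runMaxNet (by omega) x (fun j => hx.1 j) c hlast, hc,
    runMax_blockLast hpos _ i (by omega)]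
  simp_rw [hy]
  exact ((OrderIso.addRight a).map_ciSup (Set.finite_range _).bddAbove).trans (by simp [blockMax])

end Blocks

/-- **Corollary 3.12**: parallelized maximum functions on any hypercube `Q = [a,b]^d`
can be approximated with Lipschitz constant `1` at cost `≤ K d^K`, for every `ε ∈ [0,∞)`. -/
theorem parallelized_max_approx :
    ∃ K : ℕ, 0 < K ∧
      ∀ d : ℕ, 0 < d → ∀ (a b : ℝ), a < b → ∀ ε : ℝ, 0 ≤ ε → ∀ p : ℝ≥0∞, 1 ≤ p →
      ∀ (m : ℕ) (f : (Fin d → ℝ) → (Fin m → ℝ)),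
        MemMaxClass a b f →
        Cost p (cube d a b) f 1 ε ≤ ENNReal.ofReal ((K : ℝ) * (d : ℝ) ^ K) := by
  refine ⟨12, by norm_num, ?_⟩
  rintro d hd a b - ε hε p hp m f ⟨dims, rfl, hpos, hf⟩
  set Φ := runMaxNet (∑ j, dims j) m a (blockStarts dims) (blockLast dims)
  let g (x : Fin (∑ j, dims j) → ℝ) (i : Fin m) : ℝ :=
    Φ.realize x (Fin.cast RunMaxNet.runMaxNet_ℓ_output.symm i)
  have hg : ∀ x ∈ cube _ a b, g x = blockMax dims x := fun x hx =>
    funext fun i => realize_runMaxNet_blocks hpos hx i _ rfl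
  have hf : ∀ x ∈ cube _ a b, f x = blockMax dims x := fun x hx =>
    funext fun i => by simpa [blockMax] using hf x hx i
  have hm : m ≤ ∑ j, dims j := by simpa using card_nsmul_le_sum univ dims 1 fun i _ => hpos i
  calc Cost p (cube _ a b) f 1 ε ≤ Φ.params := by
        refine Cost_le_params (g := g) ⟨rfl, RunMaxNet.runMaxNet_ℓ_output, fun _ _ => rfl⟩
          (fun x hx => ?_) fun x hx y hy => ?_
        · rw [hg x hx, hf x hx, sub_self, lpNorm_zero (zero_lt_one.trans_le hp).ne']
          exact hε
        · rw [hg x hx, hg y hy, one_mul]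
          exact lpNorm_blockMax_sub_le hpos p x y
    _ ≤ (12 * (∑ j, dims j) ^ 12 : ℕ) := Nat.cast_le.2 <|
        (RunMaxNet.runMaxNet_params_le hd (by omega)).trans
          (Nat.mul_le_mul_left 12 (Nat.pow_le_pow_right hd (by norm_num)))
    _ = ENNReal.ofReal (12 * (∑ j, dims j : ℕ) ^ 12) := by
        rw [← ENNReal.ofReal_natCast]; push_cast; rfl

end
end

section
/- Lemma 3.13 (approximation of the extended maximum function): There exists a constant K ∈ ℕ which satisfies for all d ∈ ℕ, every d-dimensional hypercube Q ⊆ ℝ^d, and all ε ∈ [0,∞), p ∈ [1,∞] that Cost_p(𝔪_d|_Q, d^{1/p}, ε) ≤ K·d⁴, with the convention 1/∞ = 0. -/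
open scoped BigOperators ENNReal

noncomputable section

/-! The running maximum is computed exactly on `{x | a ≤ x}` by a ReLU network of width `d`
with `d + 2` affine layers. The first layer shifts by `-a`, so that all stored values are
nonnegative and the ReLU leaves them unchanged. Layer `k + 1` replaces coordinate `k` by the
increment `max (x k - M, 0)` of the running maximum, where `M - a` is recovered as the sum of the
increments already stored; this is the only place where the ReLU acts. The last layer adds up the
increments. Hence the realization agrees with `𝔪_d` on the cube (error `0`), and it is as
Lipschitz as `𝔪_d`, whose coordinates are `1`-Lipschitz for the sup-norm, while
`‖·‖_p ≤ d^{1/p} ‖·‖_∞` on `ℝ^d`. The network has `(d + 2) d (d + 1) ≤ 6 d⁴` parameters. -/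

open Finset Matrix

theorem lpNorm_eq_norm_toLp {p : ℝ≥0∞} (hp : p ≠ 0) {k : ℕ} (x : Fin k → ℝ) :
    lpNorm p x = ‖WithLp.toLp p x‖ := by
  rcases eq_or_ne p ∞ with rfl | hp'
  · simp [lpNorm, PiLp.norm_eq_ciSup, Real.norm_eq_abs]
  · simp [lpNorm, hp', PiLp.norm_eq_sum (ENNReal.toReal_pos hp hp'), Real.norm_eq_abs]

theorem lpNorm_sub_le_of_lipschitzWith {p : ℝ≥0∞} (hp : 1 ≤ p) {m n : ℕ} {K : NNReal}
    {f : (Fin m → ℝ) → (Fin n → ℝ)} (hf : LipschitzWith K f) (x y : Fin m → ℝ) :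
    lpNorm p (f x - f y) ≤ (n : ℝ) ^ p⁻¹.toReal * K * lpNorm p (x - y) := by
  have : Fact (1 ≤ p) := ⟨hp⟩
  simp only [lpNorm_eq_norm_toLp (zero_lt_one.trans_le hp).ne', WithLp.toLp_sub, ← dist_eq_norm]
  calc dist (WithLp.toLp p (f x)) (WithLp.toLp p (f y))
      ≤ (n : ℝ) ^ p⁻¹.toReal * dist (f x) (f y) := by
        simpa [one_div] using
          (PiLp.lipschitzWith_toLp p (fun _ : Fin n => ℝ)).dist_le_mul (f x) (f y)
    _ ≤ (n : ℝ) ^ p⁻¹.toReal * (K * dist x y) := by gcongr; exact hf.dist_le_mul x y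
    _ ≤ (n : ℝ) ^ p⁻¹.toReal * K * dist (WithLp.toLp p x) (WithLp.toLp p y) := by
        rw [← mul_assoc]
        gcongr
        simpa using (PiLp.lipschitzWith_ofLp p (fun _ : Fin m => ℝ)).dist_le_mul
          (WithLp.toLp p x) (WithLp.toLp p y)

theorem Finset.abs_sup'_sub_sup'_le {ι : Type*} {s : Finset ι} (hs : s.Nonempty)
    {x y : ι → ℝ} {c : ℝ} (h : ∀ i ∈ s, |x i - y i| ≤ c) : |s.sup' hs x - s.sup' hs y| ≤ c := by
  have key : ∀ u v : ι → ℝ, (∀ i ∈ s, u i ≤ v i + c) → s.sup' hs u ≤ s.sup' hs v + c :=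
    fun u v huv => sup'_le hs u fun i hi => (huv i hi).trans (by gcongr; exact le_sup' v hi)
  rw [abs_sub_le_iff]
  constructor
  · linarith [key x y fun i hi => by linarith [(abs_le.mp (h i hi)).2]]
  · linarith [key y x fun i hi => by linarith [(abs_le.mp (h i hi)).1]]

theorem lipschitzWith_one_pi_sup' {ι κ : Type*} [Fintype ι] [Fintype κ] {s : κ → Finset ι}
    (hs : ∀ k, (s k).Nonempty) : LipschitzWith 1 (fun (x : ι → ℝ) k => (s k).sup' (hs k) x) := by
  refine LipschitzWith.of_dist_le_mul fun x y => ?_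
  rw [NNReal.coe_one, one_mul, dist_pi_le_iff dist_nonneg]
  refine fun k => (Real.dist_eq _ _).trans_le (Finset.abs_sup'_sub_sup'_le _ fun i _ => ?_)
  simpa [Real.dist_eq] using dist_le_pi_dist x y i

namespace DNN

theorem affine_eq_mulVec_add (Φ : DNN) (k : ℕ) (v : Fin (Φ.ℓ k) → ℝ) :
    Φ.affine k v = Φ.W k *ᵥ v + Φ.b k :=
  rfl

theorem hidden_succ_apply (Φ : DNN) (k : ℕ) (x : Fin (Φ.ℓ 0) → ℝ) (i : Fin (Φ.ℓ (k + 1))) :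
    Φ.hidden (k + 1) x i = max (Φ.affine k (Φ.hidden k x) i) 0 :=
  rfl

theorem realizes_realize (Φ : DNN) : Φ.Realizes Φ.realize :=
  ⟨rfl, rfl, fun _ _ => rfl⟩

end DNN

theorem cost_le_params_of_eqOn {p : ℝ≥0∞} (hp : 1 ≤ p) {m n : ℕ} {D : Set (Fin m → ℝ)}
    {f g : (Fin m → ℝ) → (Fin n → ℝ)} {L ε : ℝ} {Φ : DNN} (hΦ : Φ.Realizes g)
    (hgf : Set.EqOn g f D) (hε : 0 ≤ ε)
    (hf : ∀ x ∈ D, ∀ y ∈ D, lpNorm p (f x - f y) ≤ L * lpNorm p (x - y)) :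
    Cost p D f L ε ≤ Φ.params := by
  have : Fact (1 ≤ p) := ⟨hp⟩
  refine sInf_le ⟨Φ, g, hΦ, rfl, fun x hx => ?_, fun x hx y hy => ?_⟩
  · simpa [hgf hx, lpNorm_eq_norm_toLp (zero_lt_one.trans_le hp).ne'] using hε
  · simpa only [hgf hx, hgf hy] using hf x hx y hy

theorem Fin.sum_Iio_val {M : Type*} [AddCommMonoid M] {d : ℕ} (f : ℕ → M) (i : Fin d) :
    ∑ j ∈ Iio i, f j = ∑ n ∈ range i, f n := by
  rw [← Nat.Iio_eq_range, ← Fin.map_valEmbedding_Iio, sum_map]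
  rfl

theorem Fin.sum_Iic_val {M : Type*} [AddCommMonoid M] {d : ℕ} (f : ℕ → M) (i : Fin d) :
    ∑ j ∈ Iic i, f j = ∑ n ∈ range (i + 1), f n := by
  rw [Nat.range_succ_eq_Iic, ← Fin.map_valEmbedding_Iic, sum_map]
  rfl

def prefixMax (a : ℝ) {d : ℕ} (x : Fin d → ℝ) : ℕ → ℝ
  | 0 => a
  | n + 1 => if h : n < d then max (prefixMax a x n) (x ⟨n, h⟩) else prefixMax a x n

section prefixMax

variable {a : ℝ} {d : ℕ} {x : Fin d → ℝ}

theorem prefixMax_succ_of_lt {n : ℕ} (h : n < d) :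
    prefixMax a x (n + 1) = max (prefixMax a x n) (x ⟨n, h⟩) :=
  dif_pos h

theorem prefixMax_succ_of_not_lt {n : ℕ} (h : ¬n < d) :
    prefixMax a x (n + 1) = prefixMax a x n :=
  dif_neg h

theorem prefixMax_le_prefixMax_succ (n : ℕ) : prefixMax a x n ≤ prefixMax a x (n + 1) := by
  by_cases h : n < d
  · exact (prefixMax_succ_of_lt h).ge.trans' (le_max_left _ _)
  · exact (prefixMax_succ_of_not_lt h).ge

theorem prefixMax_le_iff {n : ℕ} {c : ℝ} :
    prefixMax a x n ≤ c ↔ a ≤ c ∧ ∀ i : Fin d, (i : ℕ) < n → x i ≤ c := by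
  induction n with
  | zero => simp [prefixMax]
  | succ n ih =>
    by_cases h : n < d
    · rw [prefixMax_succ_of_lt h, max_le_iff, ih, and_assoc]
      refine and_congr_right fun _ => ⟨fun ⟨hlt, hn⟩ i hi => ?_,
        fun hle => ⟨fun i hi => hle i (by omega), hle _ (by simp)⟩⟩
      rcases Nat.lt_succ_iff_lt_or_eq.mp hi with hi | hi
      · exact hlt i hi
      · exact (Fin.ext hi : i = ⟨n, h⟩) ▸ hn
    · rw [prefixMax_succ_of_not_lt h, ih]
      refine and_congr_right fun _ => forall_congr' fun i => imp_congr_left ⟨fun hi => ?_, by omega⟩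
      have := i.isLt
      omega

theorem sup'_Iic_eq_prefixMax (hx : ∀ i, a ≤ x i) (i : Fin d) :
    (Iic i).sup' nonempty_Iic x = prefixMax a x ((i : ℕ) + 1) := by
  refine le_antisymm (sup'_le _ _ fun j hj => ?_) (prefixMax_le_iff.mpr ⟨?_, fun j hj => ?_⟩)
  · exact (prefixMax_le_iff.mp le_rfl).2 j (Nat.lt_succ_of_le (Finset.mem_Iic.mp hj : j ≤ i))
  · exact (hx i).trans (le_sup' x (Finset.mem_Iic.mpr (le_refl i)))
  · exact le_sup' x (Finset.mem_Iic.mpr (Fin.le_def.mpr (by omega)))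

theorem sum_Iio_prefixMax_sub (i : Fin d) :
    ∑ j ∈ Iio i, (prefixMax a x (j + 1) - prefixMax a x j) = prefixMax a x i - a := by
  rw [Fin.sum_Iio_val (fun n => prefixMax a x (n + 1) - prefixMax a x n), sum_range_sub]
  rfl

end prefixMax

def stepMatrix (d k : ℕ) : Matrix (Fin d) (Fin d) ℝ :=
  (1 : Matrix (Fin d) (Fin d) ℝ) - Matrix.of fun i j : Fin d => if (i : ℕ) = k ∧ j < i then 1 else 0

def prefixSumMatrix (d : ℕ) : Matrix (Fin d) (Fin d) ℝ :=
  Matrix.of fun i j => if j ≤ i then 1 else 0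

theorem stepMatrix_mulVec {d k : ℕ} (v : Fin d → ℝ) (i : Fin d) :
    (stepMatrix d k *ᵥ v) i = if (i : ℕ) = k then v i - ∑ j ∈ Iio i, v j else v i := by
  rw [stepMatrix, sub_mulVec, one_mulVec, Pi.sub_apply]
  by_cases hi : (i : ℕ) = k <;>
    simp [mulVec, dotProduct, hi, ← sum_filter, filter_gt_eq_Iio]

theorem prefixSumMatrix_mulVec {d : ℕ} (v : Fin d → ℝ) (i : Fin d) :
    (prefixSumMatrix d *ᵥ v) i = ∑ j ∈ Iic i, v j := by
  simp [prefixSumMatrix, mulVec, dotProduct, sum_ite, filter_ge_eq_Iic]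

-- Reducible, so that `rw` sees `Fin ((runningMaxNet d a).ℓ k)` as `Fin d`.
@[reducible]
def runningMaxNet (d : ℕ) (a : ℝ) : DNN where
  L := d + 1
  ℓ := fun _ => d
  W
    | 0 => 1
    | k + 1 => if k < d then stepMatrix d k else prefixSumMatrix d
  b
    | 0 => fun _ => -a
    | k + 1 => if k < d then 0 else fun _ => a

section runningMaxNet

variable {d : ℕ} {a : ℝ} {x : Fin d → ℝ}

theorem runningMaxNet_params : (runningMaxNet d a).params = (d + 2) * (d * (d + 1)) := by
  simp [DNN.params]

theorem runningMaxNet_params_le (hd : 0 < d) : (runningMaxNet d a).params ≤ 6 * d ^ 4 :=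
  calc (runningMaxNet d a).params = (d + 2) * (d * (d + 1)) := runningMaxNet_params
    _ ≤ (3 * d) * (d * (2 * d)) := by gcongr <;> omega
    _ = 6 * d ^ 3 := by ring
    _ ≤ 6 * d ^ 4 := by gcongr; omega

theorem runningMaxNet_affine_zero (v : Fin d → ℝ) (i : Fin d) :
    (runningMaxNet d a).affine 0 v i = v i - a := by
  simp [DNN.affine_eq_mulVec_add, sub_eq_add_neg]

theorem runningMaxNet_affine_of_lt {k : ℕ} (hk : k < d) (v : Fin d → ℝ) :
    (runningMaxNet d a).affine (k + 1) v = stepMatrix d k *ᵥ v := by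
  simp [DNN.affine_eq_mulVec_add, hk]

theorem runningMaxNet_affine_last (v : Fin d → ℝ) (i : Fin d) :
    (runningMaxNet d a).affine (d + 1) v i = (prefixSumMatrix d *ᵥ v) i + a := by
  simp [DNN.affine_eq_mulVec_add]

theorem runningMaxNet_hidden (hx : ∀ i, a ≤ x i) {k : ℕ} (hk : k ≤ d) (j : Fin d) :
    (runningMaxNet d a).hidden (k + 1) x j =
      if (j : ℕ) < k then prefixMax a x (j + 1) - prefixMax a x j else x j - a := by
  induction k generalizing j with
  | zero =>
    rw [DNN.hidden_succ_apply, runningMaxNet_affine_zero]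
    simp [DNN.hidden, hx j]
  | succ k ih =>
    rw [DNN.hidden_succ_apply, runningMaxNet_affine_of_lt hk, stepMatrix_mulVec]
    have hprev : ∀ i, (runningMaxNet d a).hidden (k + 1) x i =
        if (i : ℕ) < k then prefixMax a x (i + 1) - prefixMax a x i else x i - a := ih (by omega)
    by_cases hjk : (j : ℕ) = k
    · have hsum : ∑ i ∈ Iio j, (runningMaxNet d a).hidden (k + 1) x i = prefixMax a x k - a :=
        calc ∑ i ∈ Iio j, (runningMaxNet d a).hidden (k + 1) x i
            = ∑ i ∈ Iio j, (prefixMax a x (i + 1) - prefixMax a x i) :=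
              sum_congr rfl fun i hi => by rw [hprev, if_pos (hjk ▸ (mem_Iio.mp hi : i < j))]
          _ = prefixMax a x k - a := by rw [sum_Iio_prefixMax_sub, hjk]
      obtain rfl : j = ⟨k, hk⟩ := Fin.ext hjk
      dsimp only
      rw [if_pos rfl, hsum, hprev, if_neg (lt_irrefl k), if_pos k.lt_succ_self,
        prefixMax_succ_of_lt hk, ← max_sub_sub_right, sub_self, max_comm, sub_sub_sub_cancel_right]
    · rw [if_neg hjk, hprev, if_congr (by omega : (j : ℕ) < k + 1 ↔ (j : ℕ) < k) rfl rfl]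
      refine max_eq_left ?_
      split_ifs
      · exact sub_nonneg.mpr (prefixMax_le_prefixMax_succ _)
      · exact sub_nonneg.mpr (hx j)

theorem runningMaxNet_realize (hx : ∀ i, a ≤ x i) (i : Fin d) :
    (runningMaxNet d a).realize x i = (Iic i).sup' nonempty_Iic x := by
  have hlast : ∀ j : Fin d, (runningMaxNet d a).hidden (d + 1) x j =
      prefixMax a x (j + 1) - prefixMax a x j := fun j => by
    rw [runningMaxNet_hidden hx le_rfl, if_pos j.isLt]
  rw [DNN.realize, runningMaxNet_affine_last, prefixSumMatrix_mulVec,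
    sum_congr rfl fun j _ => hlast j,
    Fin.sum_Iic_val (fun n => prefixMax a x (n + 1) - prefixMax a x n), sum_range_sub,
    sup'_Iic_eq_prefixMax hx, prefixMax, sub_add_cancel]

end runningMaxNet

/-- **Lemma 3.13**: the extended maximum function
`𝔪_d(x) = (max{x_1}, max{x_1,x_2}, …, max{x_1,…,x_d})` on any hypercube `Q = [a,b]^d`
can be approximated with Lipschitz constant `d^{1/p}` at cost `≤ K d⁴`, for every
`ε ∈ [0,∞)` (convention `1/∞ = 0`). -/
theorem extended_max_approx :
    ∃ K : ℕ, 0 < K ∧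
      ∀ d : ℕ, 0 < d → ∀ (a b : ℝ), a < b → ∀ ε : ℝ, 0 ≤ ε → ∀ p : ℝ≥0∞, 1 ≤ p →
        Cost p (cube d a b)
            (fun x (i : Fin d) => (Finset.Iic i).sup' Finset.nonempty_Iic x)
            ((d : ℝ) ^ p⁻¹.toReal) ε ≤
          ENNReal.ofReal ((K : ℝ) * (d : ℝ) ^ 4) := by
  refine ⟨6, by norm_num, fun d hd a b _ ε hε p hp => ?_⟩
  have hcost := cost_le_params_of_eqOn (D := cube d a b) hp (runningMaxNet d a).realizes_realize
    (fun x hx => funext (runningMaxNet_realize fun i => hx.1 i)) hε fun x _ y _ => by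
      simpa only [NNReal.coe_one, mul_one] using lpNorm_sub_le_of_lipschitzWith hp
        (lipschitzWith_one_pi_sup' fun i : Fin d => nonempty_Iic) x y
  refine hcost.trans ?_
  rw [show ((6 : ℕ) : ℝ) * (d : ℝ) ^ 4 = ((6 * d ^ 4 : ℕ) : ℝ) by push_cast; rfl,
    ENNReal.ofReal_natCast]
  exact_mod_cast runningMaxNet_params_le hd

end
end
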